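/- Let q : ℝ → ℝ be continuous and strictly positive on an open interval I, and let α : ℝ → ℝ be C³ on I with α' > 0 satisfying Kummer's equation q(t) = (α'(t))² − (3/4)(α''(t)/α'(t))² + (1/2) α'''(t)/α'(t) on I. Then for any a ∈ I, the two functions u(t) = (α'(t))^{−1/2} cos(α(t)) and v(t) = (α'(t))^{−1/2} sin(α(t)) satisfy the equation y'' + q y = 0 on I and their Wronskian u v' − u' v equals 1 identically on I. -/

import Mathlib

/-!
Write `y = f(α) / √α'` with `f'' = -f`. In `y''` the terms carrying `f'(α)` are
`f'(α) · (2 (α'^{-1/2})' α' + α'^{-1/2} α'')`, which vanish precisely because the amplitude is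
`α'^{-1/2}`; what remains is `-(α'^2 - (α'^{-1/2})'' α'^{1/2}) y`, i.e. `-q y` with `q` given by
Kummer's expression. For `f = cos, sin` the Wronskian is
`(cos² α + sin² α) · α' / (√α')² = 1`.
-/

open Set Real

theorem ContDiffOn.hasDerivAt_deriv {f : ℝ → ℝ} {U : Set ℝ} {n : WithTop ℕ∞}
    (hf : ContDiffOn ℝ n f U) (hU : IsOpen U) (hn : n ≠ 0) {t : ℝ} (ht : t ∈ U) :
    HasDerivAt f (deriv f t) t :=
  ((hf.differentiableOn hn).differentiableAt (hU.mem_nhds ht)).hasDerivAt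

section Kummer

variable {f g q α : ℝ → ℝ}

theorem hasDerivAt_comp_div_sqrt_deriv {t : ℝ} (hf : HasDerivAt f (g (α t)) (α t))
    (hα : HasDerivAt α (deriv α t) t) (hα' : HasDerivAt (deriv α) (deriv (deriv α) t) t)
    (hpos : 0 < deriv α t) :
    HasDerivAt (fun t => f (α t) / √(deriv α t))
      (g (α t) * √(deriv α t)
        - f (α t) * deriv (deriv α) t / (2 * deriv α t * √(deriv α t))) t := by
  have hs : √(deriv α t) ≠ 0 := (sqrt_pos.2 hpos).ne'
  refine ((hf.comp t hα).div (hα'.sqrt hpos.ne') hs).congr_deriv ?_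
  simp only [Function.comp_apply]
  have hsq : deriv α t = √(deriv α t) ^ 2 := (sq_sqrt hpos.le).symm
  generalize √(deriv α t) = s at hs hsq ⊢
  rw [hsq]
  field_simp

theorem hasDerivAt_second_deriv_comp_div_sqrt_deriv {t : ℝ} (hf : HasDerivAt f (g (α t)) (α t))
    (hg : HasDerivAt g (-f (α t)) (α t))
    (hα : HasDerivAt α (deriv α t) t) (hα' : HasDerivAt (deriv α) (deriv (deriv α) t) t)
    (hα'' : HasDerivAt (deriv (deriv α)) (deriv (deriv (deriv α)) t) t)
    (hpos : 0 < deriv α t)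
    (hq : q t = (deriv α t) ^ 2
        - (3 / 4) * (deriv (deriv α) t / deriv α t) ^ 2
        + (1 / 2) * (deriv (deriv (deriv α)) t / deriv α t)) :
    HasDerivAt (fun t => g (α t) * √(deriv α t)
        - f (α t) * deriv (deriv α) t / (2 * deriv α t * √(deriv α t)))
      (-(q t * (f (α t) / √(deriv α t)))) t := by
  have hs : √(deriv α t) ≠ 0 := (sqrt_pos.2 hpos).ne'
  have hsqrt := hα'.sqrt hpos.ne'
  have hden : 2 * deriv α t * √(deriv α t) ≠ 0 :=
    mul_ne_zero (mul_ne_zero two_ne_zero hpos.ne') hs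
  refine (((hg.comp t hα).mul hsqrt).sub
    (((hf.comp t hα).mul hα'').div ((hα'.const_mul 2).mul hsqrt) hden)).congr_deriv ?_
  rw [hq]
  simp only [Function.comp_apply, Pi.mul_apply]
  have hsq : deriv α t = √(deriv α t) ^ 2 := (sq_sqrt hpos.le).symm
  generalize √(deriv α t) = s at hs hsq ⊢
  rw [hsq]
  field_simp
  ring

theorem comp_div_sqrt_deriv_solves_of_kummer {U : Set ℝ} (hU : IsOpen U)
    (hα : ContDiffOn ℝ 3 α U) (hpos : ∀ t ∈ U, 0 < deriv α t)
    (hkummer : ∀ t ∈ U, q t = (deriv α t) ^ 2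
        - (3 / 4) * (deriv (deriv α) t / deriv α t) ^ 2
        + (1 / 2) * (deriv (deriv (deriv α)) t / deriv α t))
    (hf : ∀ x, HasDerivAt f (g x) x) (hg : ∀ x, HasDerivAt g (-f x) x) :
    ∀ t ∈ U, deriv (deriv fun t => f (α t) / √(deriv α t)) t
      + q t * (f (α t) / √(deriv α t)) = 0 := by
  intro t ht
  have hα' : ContDiffOn ℝ 2 (deriv α) U := hα.deriv_of_isOpen hU (by norm_num)
  have hα'' : ContDiffOn ℝ 1 (deriv (deriv α)) U := hα'.deriv_of_isOpen hU (by norm_num)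
  have hfirst : deriv (fun t => f (α t) / √(deriv α t)) =ᶠ[nhds t]
      fun t => g (α t) * √(deriv α t)
        - f (α t) * deriv (deriv α) t / (2 * deriv α t * √(deriv α t)) := by
    filter_upwards [hU.mem_nhds ht] with x hx
    exact (hasDerivAt_comp_div_sqrt_deriv (hf _) (hα.hasDerivAt_deriv hU (by norm_num) hx)
      (hα'.hasDerivAt_deriv hU (by norm_num) hx) (hpos x hx)).deriv
  have hsecond := hasDerivAt_second_deriv_comp_div_sqrt_deriv (hf _) (hg _)
    (hα.hasDerivAt_deriv hU (by norm_num) ht) (hα'.hasDerivAt_deriv hU (by norm_num) ht)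
    (hα''.hasDerivAt_deriv hU one_ne_zero ht) (hpos t ht) (hkummer t ht)
  rw [hfirst.deriv_eq, hsecond.deriv]
  ring

end Kummer

theorem cos_sin_div_sqrt_wronskian {θ p p' : ℝ} (hp : 0 < p) :
    cos θ / √p * (cos θ * √p - sin θ * p' / (2 * p * √p))
      - (-sin θ * √p - cos θ * p' / (2 * p * √p)) * (sin θ / √p) = 1 := by
  have hs : √p ≠ 0 := (sqrt_pos.2 hp).ne'
  have hsq : p = √p ^ 2 := (sq_sqrt hp.le).symm
  generalize √p = s at hs hsq ⊢
  subst hsq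
  field_simp
  linear_combination (2 * s ^ 4) * sin_sq_add_cos_sq θ

theorem kummer_gives_basis_general (A B : ℝ) (q α : ℝ → ℝ)
    (hα : ContDiffOn ℝ 3 α (Set.Ioo A B))
    (hpos : ∀ t ∈ Set.Ioo A B, 0 < deriv α t)
    (hkummer : ∀ t ∈ Set.Ioo A B,
      q t = (deriv α t) ^ 2
        - (3 / 4) * (deriv (deriv α) t / deriv α t) ^ 2
        + (1 / 2) * (deriv (deriv (deriv α)) t / deriv α t))
    (u v : ℝ → ℝ)
    (hu : u = fun t => Real.cos (α t) / Real.sqrt (deriv α t))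
    (hv : v = fun t => Real.sin (α t) / Real.sqrt (deriv α t)) :
    (∀ t ∈ Set.Ioo A B, deriv (deriv u) t + q t * u t = 0) ∧
    (∀ t ∈ Set.Ioo A B, deriv (deriv v) t + q t * v t = 0) ∧
    (∀ t ∈ Set.Ioo A B, u t * deriv v t - deriv u t * v t = 1) := by
  subst hu hv
  have hnegsin (x : ℝ) : HasDerivAt (fun x => -sin x) (-cos x) x := (hasDerivAt_sin x).neg
  refine ⟨comp_div_sqrt_deriv_solves_of_kummer isOpen_Ioo hα hpos hkummer
      (g := fun x => -sin x) hasDerivAt_cos hnegsin,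
    comp_div_sqrt_deriv_solves_of_kummer isOpen_Ioo hα hpos hkummer hasDerivAt_sin hasDerivAt_cos,
    fun t ht => ?_⟩
  have hα' : ContDiffOn ℝ 2 (deriv α) (Ioo A B) := hα.deriv_of_isOpen isOpen_Ioo (by norm_num)
  have hα1 := hα.hasDerivAt_deriv isOpen_Ioo (by norm_num) ht
  have hα2 := hα'.hasDerivAt_deriv isOpen_Ioo (by norm_num) ht
  rw [(hasDerivAt_comp_div_sqrt_deriv (hasDerivAt_sin _) hα1 hα2 (hpos t ht)).deriv,
    (hasDerivAt_comp_div_sqrt_deriv (g := fun x => -sin x) (hasDerivAt_cos _) hα1 hα2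
      (hpos t ht)).deriv]
  exact cos_sin_div_sqrt_wronskian (hpos t ht)

theorem kummer_gives_basis (A B : ℝ) (q α : ℝ → ℝ)
    (hq : ContinuousOn q (Set.Ioo A B))
    (hqpos : ∀ t ∈ Set.Ioo A B, 0 < q t)
    (hα : ContDiffOn ℝ 3 α (Set.Ioo A B))
    (hpos : ∀ t ∈ Set.Ioo A B, 0 < deriv α t)
    (hkummer : ∀ t ∈ Set.Ioo A B,
      q t = (deriv α t) ^ 2
        - (3 / 4) * (deriv (deriv α) t / deriv α t) ^ 2
        + (1 / 2) * (deriv (deriv (deriv α)) t / deriv α t))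
    (a : ℝ) (ha : a ∈ Set.Ioo A B)
    (u v : ℝ → ℝ)
    (hu : u = fun t => Real.cos (α t) / Real.sqrt (deriv α t))
    (hv : v = fun t => Real.sin (α t) / Real.sqrt (deriv α t)) :
    (∀ t ∈ Set.Ioo A B, deriv (deriv u) t + q t * u t = 0) ∧
    (∀ t ∈ Set.Ioo A B, deriv (deriv v) t + q t * v t = 0) ∧
    (∀ t ∈ Set.Ioo A B, u t * deriv v t - deriv u t * v t = 1) :=
  kummer_gives_basis_general A B q α hα hpos hkummer u v hu hv
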